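/- Let a < b and let f : [a,b] → ℝ satisfy: (f1) f(a)·f(b) < 0; (f2) f is continuously differentiable on [a,b] and f'(x) ≠ 0 for all x ∈ [a,b]; (f3) 2m > M, where m = min_{x∈[a,b]} |f'(x)| and M = max_{x∈[a,b]} |f'(x)|. Let x* be the unique solution of f(x) = 0 in [a,b] and let β ∈ (0,1]. Then the damped Newton map K_β(x) = x − β·f(x)/f'(x) is a quasi-contraction with respect to x*: there exists λ ∈ (0,1) such that |K_β(x) − x*| ≤ λ·|x − x*| for all x ∈ [a,b]. -/

import Mathlib

/-!
For fixed `x`, `K_β(x) = g(x)` where `g y = y - β f(y) / f'(x)` fixes the root `x*`. By Darboux,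
`f'` has constant sign, so `g'(y) = 1 - β f'(y) / f'(x)` with `f'(y) / f'(x) ∈ [m/M, M/m]`, hence
`|g'| ≤ max (1 - β m/M) (M/m - 1)`, which is `< 1` because `M < 2m`. The mean value inequality
then bounds `|g x - g x*|` by this factor times `|x - x*|`.
-/

open Set

noncomputable def dampedNewton (f f' : ℝ → ℝ) (β x : ℝ) : ℝ :=
  x - β * (f x / f' x)

lemma abs_one_sub_mul_div_le {m M u v β : ℝ} (hm : 0 < m) (hu : u ∈ Icc m M) (hv : v ∈ Icc m M)
    (hβ0 : 0 ≤ β) (hβ1 : β ≤ 1) :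
    |1 - β * (u / v)| ≤ max (1 - β * m / M) (M / m - 1) := by
  have hM : 0 < M := hm.trans_le (hu.1.trans hu.2)
  have hv0 : 0 < v := hm.trans_le hv.1
  have hlower : m / M ≤ u / v := div_le_div₀ (hm.le.trans hu.1) hu.1 hv0 hv.2
  have hupper : u / v ≤ M / m := div_le_div₀ hM.le hu.2 hm hv.1
  rw [abs_le]
  constructor
  · have : β * (u / v) ≤ M / m := (mul_le_of_le_one_left (div_nonneg (hm.le.trans hu.1) hv0.le) hβ1).trans hupper
    linarith [le_max_right (1 - β * m / M) (M / m - 1)]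
  · have : β * m / M ≤ β * (u / v) := by
      rw [mul_div_assoc]
      exact mul_le_mul_of_nonneg_left hlower hβ0
    linarith [le_max_left (1 - β * m / M) (M / m - 1)]

lemma max_one_sub_mul_div_div_sub_one_lt_one {m M β : ℝ} (hβ : 0 < β) (hm : 0 < m)
    (hmM : m ≤ M) (hM2m : M < 2 * m) :
    max (1 - β * m / M) (M / m - 1) < 1 := by
  have hM : 0 < M := hm.trans_le hmM
  refine max_lt ?_ ?_
  · have : 0 < β * m / M := by positivity
    linarith
  · rw [div_sub_one hm.ne', div_lt_one hm]
    linarith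

lemma div_pos_of_hasDerivWithinAt_ne_zero {s : Set ℝ} {f f' : ℝ → ℝ} (hs : Convex ℝ s)
    (hf : ∀ x ∈ s, HasDerivWithinAt f (f' x) s x) (hf' : ∀ x ∈ s, f' x ≠ 0) {x y : ℝ}
    (hx : x ∈ s) (hy : y ∈ s) :
    0 < f' y / f' x := by
  rcases hasDerivWithinAt_forall_lt_or_forall_gt_of_forall_ne hs hf hf' with hneg | hpos
  · exact div_pos_of_neg_of_neg (hneg y hy) (hneg x hx)
  · exact div_pos (hpos y hy) (hpos x hx)

theorem abs_dampedNewton_sub_le {s : Set ℝ} {f f' : ℝ → ℝ} {m M β xstar x : ℝ}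
    (hs : Convex ℝ s) (hf : ∀ y ∈ s, HasDerivWithinAt f (f' y) s y)
    (hm0 : 0 < m) (hm : ∀ y ∈ s, m ≤ |f' y|) (hM : ∀ y ∈ s, |f' y| ≤ M)
    (hβ0 : 0 ≤ β) (hβ1 : β ≤ 1) (hxstar : xstar ∈ s) (hroot : f xstar = 0) (hx : x ∈ s) :
    |dampedNewton f f' β x - xstar| ≤ max (1 - β * m / M) (M / m - 1) * |x - xstar| := by
  have hf'ne : ∀ y ∈ s, f' y ≠ 0 := fun y hy => abs_pos.mp (hm0.trans_le (hm y hy))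
  set g : ℝ → ℝ := fun y => y - β * (f y / f' x)
  have hg : ∀ y ∈ s, HasDerivWithinAt g (1 - β * (f' y / f' x)) s y := fun y hy =>
    (hasDerivWithinAt_id y s).sub (((hf y hy).div_const (f' x)).const_mul β)
  have hg' : ∀ y ∈ s, ‖1 - β * (f' y / f' x)‖ ≤ max (1 - β * m / M) (M / m - 1) := by
    intro y hy
    rw [Real.norm_eq_abs, ← abs_of_pos (div_pos_of_hasDerivWithinAt_ne_zero hs hf hf'ne hx hy),
      abs_div]
    exact abs_one_sub_mul_div_le hm0 ⟨hm y hy, hM y hy⟩ ⟨hm x hx, hM x hx⟩ hβ0 hβ1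
  have hgxstar : g xstar = xstar := by simp [g, hroot]
  have hmvi := hs.norm_image_sub_le_of_norm_hasDerivWithin_le hg hg' hxstar hx
  rw [Real.norm_eq_abs, Real.norm_eq_abs, hgxstar] at hmvi
  exact hmvi

theorem damped_newton_quasi_contraction_general
    (a b : ℝ) (f f' : ℝ → ℝ)
    (hderiv : ∀ x ∈ Set.Icc a b, HasDerivWithinAt f (f' x) (Set.Icc a b) x)
    (m M : ℝ)
    (hm : IsLeast ((fun x => |f' x|) '' Set.Icc a b) m)
    (hM : IsGreatest ((fun x => |f' x|) '' Set.Icc a b) M)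
    (hmM : 2 * m > M)
    (xstar : ℝ) (hxstar : xstar ∈ Set.Icc a b) (hroot : f xstar = 0)
    (β : ℝ) (hβ0 : 0 < β) (hβ1 : β ≤ 1) :
    ∃ l : ℝ, 0 < l ∧ l < 1 ∧
      ∀ x ∈ Set.Icc a b, |(x - β * (f x / f' x)) - xstar| ≤ l * |x - xstar| := by
  have hm_le : ∀ y ∈ Icc a b, m ≤ |f' y| := fun y hy => hm.2 (mem_image_of_mem _ hy)
  have hM_ge : ∀ y ∈ Icc a b, |f' y| ≤ M := fun y hy => hM.2 (mem_image_of_mem _ hy)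
  have hmM' : m ≤ M := (hm_le xstar hxstar).trans (hM_ge xstar hxstar)
  have hm0 : 0 < m := by linarith [abs_nonneg (f' xstar), hM_ge xstar hxstar]
  set l := max (1 - β * m / M) (M / m - 1)
  have hl : l < 1 := max_one_sub_mul_div_div_sub_one_lt_one hβ0 hm0 hmM' hmM
  -- `l` vanishes when `β = 1` and `m = M`, while the statement asks for `0 < l`.
  refine ⟨max l (1 / 2), by positivity, max_lt hl (by norm_num), fun x hx => ?_⟩
  calc |(x - β * (f x / f' x)) - xstar|
      ≤ l * |x - xstar| := abs_dampedNewton_sub_le (convex_Icc a b) hderiv hm0 hm_le hM_ge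
        hβ0.le hβ1 hxstar hroot hx
    _ ≤ max l (1 / 2) * |x - xstar| := by gcongr; exact le_max_left _ _

/-- Under conditions (f1)–(f3), for every `β ∈ (0,1]` the damped Newton map
`K_β(x) = x − β·f(x)/f'(x)` is a quasi-contraction with respect to the unique solution
`x*` of `f(x) = 0` in `[a,b]`: there is `l ∈ (0,1)` with
`|K_β(x) − x*| ≤ l·|x − x*|` for all `x ∈ [a,b]`. -/
theorem damped_newton_quasi_contraction
    (a b : ℝ) (hab : a < b) (f f' : ℝ → ℝ)
    (hderiv : ∀ x ∈ Set.Icc a b, HasDerivWithinAt f (f' x) (Set.Icc a b) x)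
    (hf'cont : ContinuousOn f' (Set.Icc a b))
    (hf1 : f a * f b < 0)
    (hf'ne : ∀ x ∈ Set.Icc a b, f' x ≠ 0)
    (m M : ℝ)
    (hm : IsLeast ((fun x => |f' x|) '' Set.Icc a b) m)
    (hM : IsGreatest ((fun x => |f' x|) '' Set.Icc a b) M)
    (hmM : 2 * m > M)
    (xstar : ℝ) (hxstar : xstar ∈ Set.Icc a b) (hroot : f xstar = 0)
    (β : ℝ) (hβ0 : 0 < β) (hβ1 : β ≤ 1) :
    ∃ l : ℝ, 0 < l ∧ l < 1 ∧
      ∀ x ∈ Set.Icc a b, |(x - β * (f x / f' x)) - xstar| ≤ l * |x - xstar| :=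
  damped_newton_quasi_contraction_general a b f f' hderiv m M hm hM hmM xstar hxstar hroot β hβ0 hβ1
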